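/- arXiv:2009.02676 — 3 statements merged into one kernel-verified Lean document; each statement's English description precedes it below -/
import Mathlib

section
/- Let I = (α,β) be a bounded open interval with Lebesgue measure and |I| = β − α. Let ā : I → ℝ be measurable with 0 < c₁ ≤ ā(x) ≤ c₂ for almost every x ∈ I. Then the linear map T : L²_m(I) → L²_m(I) defined by T v = P_m(ā v) = ā v − (1/|I|)∫_I ā(ξ)v(ξ)dξ is a continuous linear bijection of L²_m(I) onto itself; explicitly, for every w ∈ L²_m(I), the unique v ∈ L²_m(I) with T v = w is given by v = ā^{-1} w − [ (∫_I ā(ξ)^{-1} w(ξ) dξ) / (∫_I ā(ξ)^{-1} dξ) ] · ā^{-1}. -/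
/-!
Multiplication by `a` is bounded on `L²` by `‖a‖_∞`, and removing the mean is an `L²`
contraction (the variance is at most the second moment), so `T v = a v - ⨍ a v` is bounded.
For `T v = w` the product `a v` must equal `w` plus a constant `c`, so `v = a⁻¹ (w + c)`;
as `∫ a⁻¹ > 0`, the constraint `∫ v = 0` determines `c`, which gives existence, uniqueness
and the explicit formula.
-/

open MeasureTheory

namespace MeasureTheory

variable {Ω : Type*} [MeasurableSpace Ω] {μ : Measure Ω}

theorem integral_pos_of_ae_pos [NeZero μ] {f : Ω → ℝ} (hf : ∀ᵐ x ∂μ, 0 < f x)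
    (hfi : Integrable f μ) : 0 < ∫ x, f x ∂μ := by
  have hf₀ : 0 ≤ᵐ[μ] f := hf.mono fun _ hx => hx.le
  refine (integral_nonneg_of_ae hf₀).lt_of_ne fun h => ?_
  obtain ⟨x, hx, hx₀⟩ := (hf.and ((integral_eq_zero_iff_of_nonneg_ae hf₀ hfi).1 h.symm)).exists
  exact hx.ne' hx₀

theorem integral_sq_sub_average_le [IsFiniteMeasure μ] {f : Ω → ℝ} (hf : MemLp f 2 μ) :
    ∫ x, (f x - ⨍ y, f y ∂μ) ^ 2 ∂μ ≤ ∫ x, f x ^ 2 ∂μ := by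
  set m := ⨍ y, f y ∂μ
  have horth : ∫ x, m * (f x - m) ∂μ = 0 := by
    rw [integral_const_mul, integral_sub_average, mul_zero]
  have hsplit : ∀ x, (f x - m) ^ 2 = f x ^ 2 - m ^ 2 - 2 * (m * (f x - m)) := fun x => by ring
  have hfi : Integrable (fun x => m * (f x - m)) μ :=
    ((hf.integrable one_le_two).sub (integrable_const m)).const_mul m
  have hsq : Integrable (fun x => f x ^ 2 - m ^ 2) μ :=
    hf.integrable_sq.sub (integrable_const _)
  simp_rw [hsplit]
  rw [integral_sub hsq (hfi.const_mul 2),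
    integral_sub hf.integrable_sq (integrable_const _), integral_const_mul, horth,
    integral_const, smul_eq_mul]
  nlinarith [measureReal_nonneg (μ := μ) (s := Set.univ), sq_nonneg m]

theorem integral_sq_mul_le {a v : Ω → ℝ} {C : ℝ} (ha : ∀ᵐ x ∂μ, ‖a x‖ ≤ C)
    (hv : MemLp v 2 μ) : ∫ x, (a x * v x) ^ 2 ∂μ ≤ C ^ 2 * ∫ x, v x ^ 2 ∂μ := by
  rw [← integral_const_mul]
  refine integral_mono_of_nonneg (.of_forall fun x => sq_nonneg _)
    (hv.integrable_sq.const_mul _) ?_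
  filter_upwards [ha] with x hx
  rw [mul_pow, ← sq_abs (a x)]
  exact mul_le_mul_of_nonneg_right (pow_le_pow_left₀ (abs_nonneg _) hx 2) (sq_nonneg _)

/-- `P_m (a v)` in the notation of the paper. -/
noncomputable def centeredMul (μ : Measure Ω) (a v : Ω → ℝ) : Ω → ℝ :=
  fun x => a x * v x - ⨍ ξ, a ξ * v ξ ∂μ

noncomputable def centeredMulInv (μ : Measure Ω) (a w : Ω → ℝ) : Ω → ℝ :=
  fun x => (a x)⁻¹ * w x - ((∫ ξ, (a ξ)⁻¹ * w ξ ∂μ) / ∫ ξ, (a ξ)⁻¹ ∂μ) * (a x)⁻¹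

section centeredMul

variable [IsFiniteMeasure μ] {a v w : Ω → ℝ}

theorem memLp_centeredMul {p : ENNReal} (ha : MemLp a ⊤ μ) (hv : MemLp v p μ) :
    MemLp (centeredMul μ a v) p μ :=
  (hv.mul' ha).sub (memLp_const _)

theorem integral_centeredMul : ∫ x, centeredMul μ a v x ∂μ = 0 :=
  integral_sub_average μ _

theorem integral_sq_centeredMul_le {C : ℝ} (ha : MemLp a ⊤ μ) (haC : ∀ᵐ x ∂μ, ‖a x‖ ≤ C)
    (hv : MemLp v 2 μ) : ∫ x, centeredMul μ a v x ^ 2 ∂μ ≤ C ^ 2 * ∫ x, v x ^ 2 ∂μ :=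
  (integral_sq_sub_average_le (hv.mul' ha)).trans (integral_sq_mul_le haC hv)

theorem memLp_centeredMulInv {p : ENNReal} (hainv : MemLp (fun x => (a x)⁻¹) ⊤ μ)
    (hw : MemLp w p μ) : MemLp (centeredMulInv μ a w) p μ :=
  (hw.mul' hainv).sub ((hainv.mono_exponent le_top).const_mul _)

variable [NeZero μ]

theorem integral_inv_pos (ha : ∀ᵐ x ∂μ, 0 < a x) (hainv : MemLp (fun x => (a x)⁻¹) ⊤ μ) :
    0 < ∫ x, (a x)⁻¹ ∂μ :=
  integral_pos_of_ae_pos (ha.mono fun _ hx => inv_pos.2 hx) (hainv.integrable le_top)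

theorem integral_centeredMulInv (ha : ∀ᵐ x ∂μ, 0 < a x)
    (hainv : MemLp (fun x => (a x)⁻¹) ⊤ μ) (hw : Integrable w μ) :
    ∫ x, centeredMulInv μ a w x ∂μ = 0 := by
  have hainvw : Integrable (fun x => (a x)⁻¹ * w x) μ :=
    ((memLp_one_iff_integrable.2 hw).mul' hainv).integrable le_rfl
  simp only [centeredMulInv]
  rw [integral_sub hainvw ((hainv.integrable le_top).const_mul _),
    integral_const_mul, div_mul_cancel₀ _ (integral_inv_pos ha hainv).ne', sub_self]

theorem centeredMul_centeredMulInv (ha : ∀ᵐ x ∂μ, 0 < a x) (hw : Integrable w μ)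
    (hw₀ : ∫ x, w x ∂μ = 0) : centeredMul μ a (centeredMulInv μ a w) =ᵐ[μ] w := by
  set k := (∫ ξ, (a ξ)⁻¹ * w ξ ∂μ) / ∫ ξ, (a ξ)⁻¹ ∂μ
  have hmul : (fun x => a x * centeredMulInv μ a w x) =ᵐ[μ] fun x => w x - k := by
    filter_upwards [ha] with x hx
    simp only [centeredMulInv]
    rw [mul_sub, ← mul_assoc, mul_inv_cancel₀ hx.ne', one_mul, mul_left_comm,
      mul_inv_cancel₀ hx.ne', mul_one]
  have havg : ⨍ x, a x * centeredMulInv μ a w x ∂μ = -k := by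
    have hμ : μ.real Set.univ ≠ 0 := (measureReal_univ_pos (μ := μ)).ne'
    rw [average_congr hmul, average_eq, integral_sub hw (integrable_const k), hw₀,
      integral_const, smul_eq_mul, smul_eq_mul]
    field_simp
    ring
  filter_upwards [hmul] with x hx
  simp only [centeredMul, havg]
  rw [hx]
  ring

theorem ae_eq_zero_of_mul_ae_eq_const (ha : ∀ᵐ x ∂μ, 0 < a x)
    (hainv : MemLp (fun x => (a x)⁻¹) ⊤ μ) {u : Ω → ℝ} {d : ℝ} (hu : ∫ x, u x ∂μ = 0)
    (h : ∀ᵐ x ∂μ, a x * u x = d) : u =ᵐ[μ] 0 := by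
  have hu_eq : u =ᵐ[μ] fun x => d * (a x)⁻¹ := by
    filter_upwards [ha, h] with x hx hxd
    rw [← hxd]
    field_simp
  have hd : d = 0 := by
    have hint := integral_congr_ae hu_eq
    rw [hu, integral_const_mul] at hint
    exact (mul_eq_zero.1 hint.symm).resolve_right (integral_inv_pos ha hainv).ne'
  filter_upwards [hu_eq] with x hx
  simp [hx, hd]

theorem ae_eq_of_centeredMul_ae_eq (ha : ∀ᵐ x ∂μ, 0 < a x)
    (hainv : MemLp (fun x => (a x)⁻¹) ⊤ μ) {v' : Ω → ℝ} (hv : Integrable v μ)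
    (hv' : Integrable v' μ) (hint : ∫ x, v x ∂μ = ∫ x, v' x ∂μ)
    (h : centeredMul μ a v =ᵐ[μ] centeredMul μ a v') : v =ᵐ[μ] v' := by
  have hdiff : ∀ᵐ x ∂μ, a x * (v - v') x = (⨍ ξ, a ξ * v ξ ∂μ) - ⨍ ξ, a ξ * v' ξ ∂μ := by
    filter_upwards [h] with x hx
    simp only [centeredMul] at hx
    simp only [Pi.sub_apply]
    linarith
  have hzero := ae_eq_zero_of_mul_ae_eq_const ha hainv
    (by simp only [Pi.sub_apply]; rw [integral_sub hv hv', hint, sub_self]) hdiff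
  filter_upwards [hzero] with x hx
  simpa [sub_eq_zero] using hx

end centeredMul

end MeasureTheory

/-- Let `ā` be measurable on `I = (α,β)` with
`0 < c₁ ≤ ā ≤ c₂` a.e.  Then `T v = P_m(ā v) = ā v - (1/|I|)∫ ā v` maps the
zero-mean subspace `L²_m(I)` continuously into itself, and is a bijection of
`L²_m(I)` onto itself whose inverse is given by the explicit formula
`v = ā⁻¹ w - [(∫ ā⁻¹ w)/(∫ ā⁻¹)] ā⁻¹`. -/
theorem stmt5 (α β c₁ c₂ : ℝ) (hαβ : α < β) (hc₁ : 0 < c₁)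
    (abar : ℝ → ℝ) (hmeas : Measurable abar)
    (hbd : ∀ᵐ x ∂(volume.restrict (Set.Ioo α β)), c₁ ≤ abar x ∧ abar x ≤ c₂) :
    letI μ := volume.restrict (Set.Ioo α β)
    letI T : (ℝ → ℝ) → (ℝ → ℝ) :=
      fun v x => abar x * v x - (β - α)⁻¹ * ∫ ξ, abar ξ * v ξ ∂μ
    -- T maps L²_m(I) into L²_m(I) and is continuous
    (∀ v : ℝ → ℝ, MemLp v 2 μ → (∫ x, v x ∂μ) = 0 →
        MemLp (T v) 2 μ ∧ (∫ x, T v x ∂μ) = 0 ∧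
        (∫ x, (T v x) ^ 2 ∂μ) ≤ (2 * c₂) ^ 2 * ∫ x, (v x) ^ 2 ∂μ) ∧
    -- T is a bijection of L²_m(I) with the explicit inverse
    (∀ w : ℝ → ℝ, MemLp w 2 μ → (∫ x, w x ∂μ) = 0 →
        letI v : ℝ → ℝ := fun x => (abar x)⁻¹ * w x -
          ((∫ ξ, (abar ξ)⁻¹ * w ξ ∂μ) / (∫ ξ, (abar ξ)⁻¹ ∂μ)) * (abar x)⁻¹
        MemLp v 2 μ ∧ (∫ x, v x ∂μ) = 0 ∧ T v =ᵐ[μ] w ∧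
        ∀ v' : ℝ → ℝ, MemLp v' 2 μ → (∫ x, v' x ∂μ) = 0 →
          T v' =ᵐ[μ] w → v' =ᵐ[μ] v) := by
  set μ := volume.restrict (Set.Ioo α β) with hμ
  have : IsFiniteMeasure μ := isFiniteMeasure_restrict.2 measure_Ioo_lt_top.ne
  have hμuniv : μ.real Set.univ = β - α := by simp [hμ, hαβ.le]
  have : NeZero μ := ⟨fun h => by simp [h] at hμuniv; linarith⟩
  have hT : (fun v x => abar x * v x - (β - α)⁻¹ * ∫ ξ, abar ξ * v ξ ∂μ) =
      centeredMul μ abar := by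
    ext v x
    rw [centeredMul, average_eq, hμuniv, smul_eq_mul]
  rw [hT]
  have hpos : ∀ᵐ x ∂μ, 0 < abar x := hbd.mono fun x hx => hc₁.trans_le hx.1
  have hnorm : ∀ᵐ x ∂μ, ‖abar x‖ ≤ c₂ := hbd.mono fun x hx => by
    rw [Real.norm_of_nonneg (hc₁.le.trans hx.1)]
    exact hx.2
  have hnorm_inv : ∀ᵐ x ∂μ, ‖(abar x)⁻¹‖ ≤ c₁⁻¹ := hbd.mono fun x hx => by
    rw [norm_inv, Real.norm_of_nonneg (hc₁.le.trans hx.1)]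
    exact inv_anti₀ hc₁ hx.1
  have habar : MemLp abar ⊤ μ := memLp_top_of_bound hmeas.aestronglyMeasurable c₂ hnorm
  have hinv : MemLp (fun x => (abar x)⁻¹) ⊤ μ :=
    memLp_top_of_bound hmeas.inv.aestronglyMeasurable c₁⁻¹ hnorm_inv
  refine ⟨fun v hv _ => ⟨memLp_centeredMul habar hv, integral_centeredMul, ?_⟩,
    fun w hw hw₀ => ?_⟩
  · obtain ⟨x₀, hx₀⟩ := hnorm.exists
    have hc₂ : 0 ≤ c₂ := (norm_nonneg _).trans hx₀
    calc ∫ x, centeredMul μ abar v x ^ 2 ∂μ ≤ c₂ ^ 2 * ∫ x, v x ^ 2 ∂μ :=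
          integral_sq_centeredMul_le habar hnorm hv
      _ ≤ (2 * c₂) ^ 2 * ∫ x, v x ^ 2 ∂μ :=
          mul_le_mul_of_nonneg_right (by nlinarith) (integral_nonneg fun x => sq_nonneg _)
  have hTinv := centeredMul_centeredMulInv hpos (hw.integrable one_le_two) hw₀
  have hinv₀ := integral_centeredMulInv hpos hinv (hw.integrable one_le_two)
  refine ⟨memLp_centeredMulInv hinv hw, hinv₀, hTinv, fun v' hv' hv'₀ hTv' => ?_⟩
  exact ae_eq_of_centeredMul_ae_eq hpos hinv (hv'.integrable one_le_two)
    ((memLp_centeredMulInv hinv hw).integrable one_le_two) (hv'₀.trans hinv₀.symm)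
    (hTv'.trans hTinv.symm)
end

section
/- Let μ be a finite measure on a measurable space and let g : ℝ → ℝ be continuously differentiable with bounded derivative, |g'(ξ)| ≤ M for all ξ ∈ ℝ. Then for every v̄, h ∈ L²(μ), the Nemytskii operator v ↦ g∘v from L²(μ) to L²(μ) is Gâteaux differentiable at v̄ in the direction h with derivative g'(v̄)·h: that is, ‖ (g(v̄ + θh) − g(v̄))/θ − g'(v̄)·h ‖_{L²(μ)} → 0 as θ → 0 (θ real, θ ≠ 0). Moreover h ↦ g'(v̄)·h is a bounded linear operator of L²(μ) with norm at most M. -/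
/-!
By the mean value theorem the difference quotients `(g (v̄ + θ h) - g v̄) / θ` are bounded
pointwise by `M |h|`, so the squared error is dominated by `(2M)² h² ∈ L¹`; pointwise it tends
to `0` by the chain rule, and dominated convergence concludes. The bound on `g'(v̄) h` is the
pointwise bound `|g'(v̄) h| ≤ M |h|` integrated.
-/

open MeasureTheory Filter Topology

section DifferenceQuotient

variable {g gd : ℝ → ℝ} {M : ℝ}

lemma abs_sub_le_of_hasDerivAt_of_abs_le (hderiv : ∀ ξ, HasDerivAt g (gd ξ) ξ)
    (hbd : ∀ ξ, |gd ξ| ≤ M) (a b : ℝ) : |g b - g a| ≤ M * |b - a| :=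
  convex_univ.norm_image_sub_le_of_norm_hasDerivWithin_le
    (fun ξ _ => (hderiv ξ).hasDerivWithinAt) (fun ξ _ => hbd ξ) (Set.mem_univ a) (Set.mem_univ b)

lemma abs_diffQuot_le_of_hasDerivAt_of_abs_le (hderiv : ∀ ξ, HasDerivAt g (gd ξ) ξ)
    (hbd : ∀ ξ, |gd ξ| ≤ M) (a b θ : ℝ) : |(g (a + θ * b) - g a) / θ| ≤ M * |b| := by
  have hM : 0 ≤ M := (abs_nonneg _).trans (hbd 0)
  rw [abs_div]
  refine div_le_of_le_mul₀ (abs_nonneg θ) (by positivity) ?_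
  calc |g (a + θ * b) - g a| ≤ M * |a + θ * b - a| :=
        abs_sub_le_of_hasDerivAt_of_abs_le hderiv hbd _ _
    _ = M * |b| * |θ| := by rw [add_sub_cancel_left, abs_mul]; ring

lemma sq_diffQuot_sub_le_of_hasDerivAt_of_abs_le (hderiv : ∀ ξ, HasDerivAt g (gd ξ) ξ)
    (hbd : ∀ ξ, |gd ξ| ≤ M) (a b θ : ℝ) :
    ((g (a + θ * b) - g a) / θ - gd a * b) ^ 2 ≤ (2 * M) ^ 2 * b ^ 2 := by
  have hquot := abs_diffQuot_le_of_hasDerivAt_of_abs_le hderiv hbd a b θ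
  have hlin : |gd a * b| ≤ M * |b| := by
    rw [abs_mul]; exact mul_le_mul_of_nonneg_right (hbd a) (abs_nonneg b)
  calc ((g (a + θ * b) - g a) / θ - gd a * b) ^ 2
      = |(g (a + θ * b) - g a) / θ - gd a * b| ^ 2 := (sq_abs _).symm
    _ ≤ (M * |b| + M * |b|) ^ 2 :=
        pow_le_pow_left₀ (abs_nonneg _) ((abs_sub _ _).trans (add_le_add hquot hlin)) 2
    _ = (2 * M) ^ 2 * b ^ 2 := by rw [← sq_abs b]; ring

lemma tendsto_diffQuot_of_hasDerivAt {d a : ℝ} (hg : HasDerivAt g d a) (b : ℝ) :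
    Tendsto (fun θ => (g (a + θ * b) - g a) / θ) (𝓝[≠] 0) (𝓝 (d * b)) := by
  have hline : HasDerivAt (fun θ : ℝ => a + θ * b) b 0 := by
    simpa using ((hasDerivAt_id (0 : ℝ)).mul_const b).const_add a
  have hg' : HasDerivAt g d (a + 0 * b) := by simpa using hg
  have hcomp : HasDerivAt (fun θ => g (a + θ * b)) (d * b) 0 := hg'.comp 0 hline
  simpa [div_eq_inv_mul] using hasDerivAt_iff_tendsto_slope_zero.mp hcomp

end DifferenceQuotient

section Nemytskii

variable {Ω : Type*} [MeasurableSpace Ω] {μ : Measure Ω} {g gd : ℝ → ℝ} {M : ℝ}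
  {vbar h : Ω → ℝ}

lemma tendsto_integral_sq_nemytskii_diffQuot_sub (hderiv : ∀ ξ, HasDerivAt g (gd ξ) ξ)
    (hbd : ∀ ξ, |gd ξ| ≤ M) (hv : AEStronglyMeasurable vbar μ)
    (hgdv : AEStronglyMeasurable (fun x => gd (vbar x)) μ) (hh : MemLp h 2 μ) :
    Tendsto (fun θ : ℝ => ∫ x, ((g (vbar x + θ * h x) - g (vbar x)) / θ - gd (vbar x) * h x) ^ 2 ∂μ)
      (𝓝[≠] 0) (𝓝 0) := by
  have hg : Continuous g := continuous_iff_continuousAt.mpr fun ξ => (hderiv ξ).continuousAt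
  have hhm := hh.aestronglyMeasurable
  have hmeas : ∀ θ : ℝ, AEStronglyMeasurable
      (fun x => ((g (vbar x + θ * h x) - g (vbar x)) / θ - gd (vbar x) * h x) ^ 2) μ := by
    intro θ
    simp only [div_eq_mul_inv]
    exact ((((hg.comp_aestronglyMeasurable (hv.add (hhm.const_mul θ))).sub
      (hg.comp_aestronglyMeasurable hv)).mul_const θ⁻¹).sub (hgdv.mul hhm)).pow 2
  have hdom : ∀ θ x, ‖((g (vbar x + θ * h x) - g (vbar x)) / θ - gd (vbar x) * h x) ^ 2‖ ≤
      (2 * M) ^ 2 * h x ^ 2 := fun θ x => by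
    rw [Real.norm_of_nonneg (sq_nonneg _)]
    exact sq_diffQuot_sub_le_of_hasDerivAt_of_abs_le hderiv hbd _ _ _
  have hlim : ∀ x, Tendsto
      (fun θ : ℝ => ((g (vbar x + θ * h x) - g (vbar x)) / θ - gd (vbar x) * h x) ^ 2)
      (𝓝[≠] 0) (𝓝 0) := fun x => by
    simpa using ((tendsto_diffQuot_of_hasDerivAt (hderiv (vbar x)) (h x)).sub_const
      (gd (vbar x) * h x)).pow 2
  simpa using tendsto_integral_filter_of_dominated_convergence _
    (Eventually.of_forall hmeas) (Eventually.of_forall fun θ => Eventually.of_forall (hdom θ))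
    (hh.integrable_sq.const_mul _) (Eventually.of_forall hlim)

lemma memLp_two_mul_of_abs_le {c : Ω → ℝ} (hc : AEStronglyMeasurable c μ) (hbd : ∀ x, |c x| ≤ M)
    (hh : MemLp h 2 μ) : MemLp (fun x => c x * h x) 2 μ :=
  hh.mul' (memLp_top_of_bound hc M (Eventually.of_forall hbd))

lemma integral_sq_mul_le_of_abs_le {c : Ω → ℝ} (hbd : ∀ x, |c x| ≤ M) (hh : MemLp h 2 μ) :
    ∫ x, (c x * h x) ^ 2 ∂μ ≤ M ^ 2 * ∫ x, h x ^ 2 ∂μ := by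
  rw [← integral_const_mul]
  refine integral_mono_of_nonneg (Eventually.of_forall fun x => sq_nonneg _)
    (hh.integrable_sq.const_mul _) (Eventually.of_forall fun x => ?_)
  change (c x * h x) ^ 2 ≤ M ^ 2 * h x ^ 2
  rw [mul_pow, ← sq_abs (c x)]
  exact mul_le_mul_of_nonneg_right (pow_le_pow_left₀ (abs_nonneg _) (hbd x) 2) (sq_nonneg _)

end Nemytskii

theorem stmt7_general {Ω : Type*} [MeasurableSpace Ω] (μ : Measure Ω)
    (g gd : ℝ → ℝ) (M : ℝ)
    (hderiv : ∀ ξ : ℝ, HasDerivAt g (gd ξ) ξ)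
    (hcont : Continuous gd)
    (hbd : ∀ ξ : ℝ, |gd ξ| ≤ M)
    (vbar h : Ω → ℝ) (hv : MemLp vbar 2 μ) (hh : MemLp h 2 μ) :
    -- Gâteaux differentiability: the L² norm of the difference quotient error
    -- tends to 0 as θ → 0, θ ≠ 0
    Filter.Tendsto
      (fun θ : ℝ => ∫ x,
        ((g (vbar x + θ * h x) - g (vbar x)) / θ - gd (vbar x) * h x) ^ 2 ∂μ)
      (nhdsWithin 0 {(0:ℝ)}ᶜ) (nhds 0) ∧
    -- `h ↦ gd(v̄)·h` is a bounded linear operator of `L²(μ)` with norm ≤ M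
    MemLp (fun x => gd (vbar x) * h x) 2 μ ∧
    (∫ x, (gd (vbar x) * h x) ^ 2 ∂μ) ≤ M ^ 2 * ∫ x, (h x) ^ 2 ∂μ := by
  have hgdv : AEStronglyMeasurable (fun x => gd (vbar x)) μ :=
    hcont.comp_aestronglyMeasurable hv.aestronglyMeasurable
  exact ⟨tendsto_integral_sq_nemytskii_diffQuot_sub hderiv hbd hv.aestronglyMeasurable hgdv hh,
    memLp_two_mul_of_abs_le hgdv (fun x => hbd (vbar x)) hh,
    integral_sq_mul_le_of_abs_le (fun x => hbd (vbar x)) hh⟩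

/-- Let `μ` be a finite measure and `g : ℝ → ℝ` continuously
differentiable with bounded derivative `|g'| ≤ M`.  Then for `v̄, h ∈ L²(μ)`
the Nemytskii operator `v ↦ g∘v` is Gâteaux differentiable at `v̄` in the
direction `h` with derivative `g'(v̄)·h`, which defines a bounded linear
operator of `L²(μ)` of norm at most `M`. -/
theorem stmt7 {Ω : Type*} [MeasurableSpace Ω] (μ : Measure Ω) [IsFiniteMeasure μ]
    (g gd : ℝ → ℝ) (M : ℝ)
    (hderiv : ∀ ξ : ℝ, HasDerivAt g (gd ξ) ξ)
    (hcont : Continuous gd)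
    (hbd : ∀ ξ : ℝ, |gd ξ| ≤ M)
    (vbar h : Ω → ℝ) (hv : MemLp vbar 2 μ) (hh : MemLp h 2 μ) :
    -- Gâteaux differentiability: the L² norm of the difference quotient error
    -- tends to 0 as θ → 0, θ ≠ 0
    Filter.Tendsto
      (fun θ : ℝ => ∫ x,
        ((g (vbar x + θ * h x) - g (vbar x)) / θ - gd (vbar x) * h x) ^ 2 ∂μ)
      (nhdsWithin 0 {(0:ℝ)}ᶜ) (nhds 0) ∧
    -- `h ↦ gd(v̄)·h` is a bounded linear operator of `L²(μ)` with norm ≤ M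
    MemLp (fun x => gd (vbar x) * h x) 2 μ ∧
    (∫ x, (gd (vbar x) * h x) ^ 2 ∂μ) ≤ M ^ 2 * ∫ x, (h x) ^ 2 ∂μ :=
  stmt7_general μ g gd M hderiv hcont hbd vbar h hv hh
end

section
/- Let W be a real normed vector space, let s < t be real numbers, let U : ℝ → W and φ : ℝ → ℝ be differentiable at every point of [s,t], let φ̄ ∈ ℝ satisfy φ(τ) > φ̄ for all τ ∈ [s,t], and let θ ∈ (0,1] and K > 0 be constants such that −φ'(τ) ≥ K·(φ(τ) − φ̄)^{1−θ}·‖U'(τ)‖ for every τ ∈ [s,t]. Then (φ(s) − φ̄)^θ − (φ(t) − φ̄)^θ ≥ Kθ·‖U(t) − U(s)‖; in particular ‖U(t) − U(s)‖ ≤ (Kθ)^{-1}·(φ(s) − φ̄)^θ. -/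
/-! With `ψ = (φ - φ̄)^θ`, the chain rule gives `ψ' = θ (φ - φ̄)^(θ-1) φ'`, so multiplying the
hypothesis by `θ (φ - φ̄)^(θ-1)` turns it into `K θ ‖U'‖ ≤ -ψ'`. The mean value inequality with a
variable bound then compares the increment of `K θ U` with the decrease of `ψ`. -/

open Set

theorem norm_sub_le_sub_of_norm_deriv_right_le_deriv {E : Type*} [NormedAddCommGroup E]
    [NormedSpace ℝ E] {f f' : ℝ → E} {g g' : ℝ → ℝ} {a b : ℝ} (hab : a ≤ b)
    (hf : ContinuousOn f (Icc a b)) (hf' : ∀ x ∈ Ico a b, HasDerivWithinAt f (f' x) (Ici x) x)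
    (hg : ContinuousOn g (Icc a b)) (hg' : ∀ x ∈ Ico a b, HasDerivWithinAt g (g' x) (Ici x) x)
    (bound : ∀ x ∈ Ico a b, ‖f' x‖ ≤ g' x) :
    ‖f b - f a‖ ≤ g b - g a := by
  have key := image_norm_le_of_norm_deriv_right_le_deriv_boundary'
    (f := fun x => f x - f a) (B := fun x => g x - g a) (hf.sub continuousOn_const)
    (fun x hx => (hf' x hx).sub_const (f a)) (by simp) (hg.sub continuousOn_const)
    (fun x hx => (hg' x hx).sub_const (g a)) bound
  exact key (right_mem_Icc.2 hab)

theorem norm_sub_le_sub_of_norm_deriv_le_neg_deriv {E : Type*} [NormedAddCommGroup E]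
    [NormedSpace ℝ E] {f f' : ℝ → E} {g g' : ℝ → ℝ} {a b : ℝ} (hab : a ≤ b)
    (hf : ∀ x ∈ Icc a b, HasDerivAt f (f' x) x) (hg : ∀ x ∈ Icc a b, HasDerivAt g (g' x) x)
    (bound : ∀ x ∈ Icc a b, ‖f' x‖ ≤ -g' x) :
    ‖f b - f a‖ ≤ g a - g b := by
  have key := norm_sub_le_sub_of_norm_deriv_right_le_deriv hab
    (fun x hx => (hf x hx).continuousAt.continuousWithinAt)
    (fun x hx => (hf x (Ico_subset_Icc_self hx)).hasDerivWithinAt)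
    (fun x hx => (hg x hx).neg.continuousAt.continuousWithinAt)
    (fun x hx => (hg x (Ico_subset_Icc_self hx)).neg.hasDerivWithinAt)
    (fun x hx => bound x (Ico_subset_Icc_self hx))
  rwa [Pi.neg_apply, Pi.neg_apply, neg_sub_neg] at key

theorem mul_le_neg_mul_rpow_of_mul_rpow_le {x θ K n d : ℝ} (hx : 0 < x) (hθ : 0 ≤ θ)
    (h : K * x ^ (1 - θ) * n ≤ -d) :
    K * θ * n ≤ -(d * θ * x ^ (θ - 1)) := by
  have hcancel : x ^ (θ - 1) * x ^ (1 - θ) = 1 := by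
    rw [← Real.rpow_add hx]; simp
  calc K * θ * n = θ * x ^ (θ - 1) * (K * x ^ (1 - θ) * n) := by
        linear_combination (-(K * θ * n)) * hcancel
    _ ≤ θ * x ^ (θ - 1) * -d := by gcongr
    _ = -(d * θ * x ^ (θ - 1)) := by ring

/-- The abstract Łojasiewicz–Simon estimate: if on `[s,t]`
we have `φ > φ̄` and `-φ'(τ) ≥ K (φ(τ) - φ̄)^{1-θ} ‖U'(τ)‖`, then
`(φ(s) - φ̄)^θ - (φ(t) - φ̄)^θ ≥ K θ ‖U(t) - U(s)‖`; in particular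
`‖U(t) - U(s)‖ ≤ (Kθ)⁻¹ (φ(s) - φ̄)^θ`. -/
theorem stmt11 {W : Type*} [NormedAddCommGroup W] [NormedSpace ℝ W]
    (s t : ℝ) (hst : s < t)
    (U : ℝ → W) (U' : ℝ → W) (φ φ' : ℝ → ℝ) (φbar θ K : ℝ)
    (hU : ∀ τ ∈ Set.Icc s t, HasDerivAt U (U' τ) τ)
    (hφ : ∀ τ ∈ Set.Icc s t, HasDerivAt φ (φ' τ) τ)
    (hgt : ∀ τ ∈ Set.Icc s t, φbar < φ τ)
    (hθ : θ ∈ Set.Ioc (0:ℝ) 1) (hK : 0 < K)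
    (hineq : ∀ τ ∈ Set.Icc s t,
        K * (φ τ - φbar) ^ (1 - θ) * ‖U' τ‖ ≤ -φ' τ) :
    K * θ * ‖U t - U s‖ ≤ (φ s - φbar) ^ θ - (φ t - φbar) ^ θ ∧
    ‖U t - U s‖ ≤ (K * θ)⁻¹ * (φ s - φbar) ^ θ := by
  have hKθ : 0 < K * θ := mul_pos hK hθ.1
  have hpos : ∀ τ ∈ Icc s t, 0 < φ τ - φbar := fun τ hτ => sub_pos.2 (hgt τ hτ)
  have hψ : ∀ τ ∈ Icc s t, HasDerivAt (fun x => (φ x - φbar) ^ θ)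
      (φ' τ * θ * (φ τ - φbar) ^ (θ - 1)) τ := fun τ hτ =>
    ((hφ τ hτ).sub_const φbar).rpow_const (Or.inl (hpos τ hτ).ne')
  have hdecay : K * θ * ‖U t - U s‖ ≤ (φ s - φbar) ^ θ - (φ t - φbar) ^ θ := by
    have key := norm_sub_le_sub_of_norm_deriv_le_neg_deriv hst.le
      (fun τ hτ => (hU τ hτ).const_smul (K * θ)) hψ fun τ hτ => by
        rw [norm_smul, Real.norm_of_nonneg hKθ.le]
        exact mul_le_neg_mul_rpow_of_mul_rpow_le (hpos τ hτ) hθ.1.le (hineq τ hτ)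
    rwa [Pi.smul_apply, Pi.smul_apply, ← smul_sub, norm_smul, Real.norm_of_nonneg hKθ.le] at key
  refine ⟨hdecay, ?_⟩
  have hψt : 0 ≤ (φ t - φbar) ^ θ := Real.rpow_nonneg (hpos t (right_mem_Icc.2 hst.le)).le θ
  rw [le_inv_mul_iff₀ hKθ]
  linarith
end
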